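/- Let K be an imaginary quadratic field and 𝔞 a nonzero fractional ideal of O_K, embedded in ℂ. Then for s > 1, N(𝔞)^s · Σ_{ξ ∈ 𝔞, ξ≠0} |ξ|^{-2s} = #(O_K^×) · Σ over integral ideals I in the ideal class of 𝔞^{-1} of N(I)^{-s}. (Nonzero elements ξ of 𝔞 up to units correspond bijectively to integral ideals I with I·𝔞 = (ξ).) -/

import Mathlib

/-!
Sending `ξ ∈ 𝔞 ∖ {0}` to the integral ideal `I` with `I𝔞 = (ξ)` maps onto the integral ideals
in the class of `𝔞⁻¹`, and its fibres are the orbits of `O_Kˣ`, which acts freely. Along this map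
`N(I) N(𝔞) = |N_{K/ℚ}(ξ)| = |σ ξ|²`, so the left-hand series is the right-hand one with every term
repeated `#O_Kˣ` times. The unit group is finite because `K` has a single infinite place, at which
every unit has absolute value `1` by the product formula.
-/

open NumberField Complex

open scoped nonZeroDivisors ENNReal NNReal

theorem ENNReal.tsum_comp_eq_mul_tsum_of_encard_fiber {α β : Type*} {Φ : α → β} {n : ℕ∞}
    (hΦ : ∀ b, ENat.card (Φ ⁻¹' {b}) = n) (f : β → ℝ≥0∞) :
    ∑' a, f (Φ a) = n * ∑' b, f b := by
  rw [← ENNReal.tsum_fiberwise _ Φ, ← ENNReal.tsum_mul_left]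
  refine tsum_congr fun b ↦ ?_
  rw [tsum_congr fun a : Φ ⁻¹' {b} ↦ congrArg f a.2, ENNReal.tsum_const, hΦ]

theorem tsum_comp_eq_mul_tsum_of_encard_fiber {α β : Type*} {Φ : α → β} {n : ℕ}
    (hΦ : ∀ b, ENat.card (Φ ⁻¹' {b}) = n) {f : β → ℝ} (hf : ∀ b, 0 ≤ f b) :
    ∑' a, f (Φ a) = n * ∑' b, f b := by
  lift f to β → ℝ≥0 using hf
  rw [← NNReal.coe_tsum, ← NNReal.coe_tsum, NNReal.tsum_eq_toNNReal_tsum,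
    NNReal.tsum_eq_toNNReal_tsum,
    ENNReal.tsum_comp_eq_mul_tsum_of_encard_fiber hΦ fun b ↦ (f b : ℝ≥0∞)]
  simp

theorem Real.rpow_mul_rpow_neg_two_mul {a n t : ℝ} (ha : 0 < a) (hn : 0 ≤ n) (ht : 0 ≤ t)
    (h : t ^ 2 = n * a) (s : ℝ) : a ^ s * t ^ (-(2 * s)) = n ^ (-s) := by
  have ht2 : t ^ (-(2 * s)) = (n * a) ^ (-s) := by
    rw [← h, ← Real.rpow_natCast, ← Real.rpow_mul ht]; norm_num
  rw [ht2, Real.mul_rpow hn ha.le, Real.rpow_neg ha.le, mul_left_comm,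
    mul_inv_cancel₀ (Real.rpow_pos_of_pos ha s).ne', mul_one]

namespace NumberField

variable {K : Type*} [Field K]

theorem ComplexEmbedding.not_isReal_of_im_ne_zero {σ : K →+* ℂ} {x : K} (hx : (σ x).im ≠ 0) :
    ¬ComplexEmbedding.IsReal σ := fun hσ ↦
  hx <| conj_eq_iff_im.mp <| by
    rw [← ComplexEmbedding.conjugate_coe_eq, ComplexEmbedding.isReal_iff.mp hσ]

variable [NumberField K]

namespace InfinitePlace

theorem subsingleton_of_finrank_eq_two (hdeg : Module.finrank ℚ K = 2) {σ : K →+* ℂ}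
    (hσ : ¬ComplexEmbedding.IsReal σ) : Subsingleton (InfinitePlace K) := by
  classical
  have hc : 0 < nrComplexPlaces K := Fintype.card_pos_iff.mpr ⟨⟨mk σ, isComplex_mk_iff.mpr hσ⟩⟩
  have hrank := card_add_two_mul_card_eq_rank K
  rw [← Fintype.card_le_one_iff_subsingleton, card_eq_nrRealPlaces_add_nrComplexPlaces]
  omega

theorem abs_norm_eq_norm_sq [Subsingleton (InfinitePlace K)] {σ : K →+* ℂ}
    (hσ : ¬ComplexEmbedding.IsReal σ) (x : K) : ((|Algebra.norm ℚ x| : ℚ) : ℝ) = ‖σ x‖ ^ 2 := by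
  rw [← prod_eq_abs_norm, Fintype.prod_subsingleton _ (mk σ),
    (isComplex_mk_iff.mpr hσ).mult_eq_two, apply]

end InfinitePlace

open InfinitePlace in
theorem Units.finite_of_subsingleton_infinitePlace [Subsingleton (InfinitePlace K)] :
    Finite (𝓞 K)ˣ := by
  have htorsion (u : (𝓞 K)ˣ) : u ∈ Units.torsion K := (Units.mem_torsion K).mpr fun w ↦ by
    have hsum := Units.sum_mult_mul_log u
    rw [Fintype.sum_subsingleton _ w, mul_eq_zero, Nat.cast_eq_zero] at hsum
    exact Real.eq_one_of_pos_of_log_eq_zero (Units.pos_at_place u w)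
      (hsum.resolve_left mult_pos.ne')
  exact Finite.of_injective (fun u ↦ (⟨u, htorsion u⟩ : Units.torsion K))
    fun _ _ h ↦ congrArg Subtype.val h

end NumberField

namespace FractionalIdeal

section DedekindDomain

variable {R K : Type*} [CommRing R] [Field K] [Algebra R K] [IsFractionRing R K]
  (𝔞 : FractionalIdeal R⁰ K)

abbrev NonzeroElems := {x : K // x ∈ 𝔞 ∧ x ≠ 0}

/-- The integral ideals in the ideal class of `𝔞⁻¹`. -/
abbrev IdealsMulPrincipal :=
  {I : Ideal R // I ≠ ⊥ ∧ ∃ ξ : K, ξ ≠ 0 ∧ (I : FractionalIdeal R⁰ K) * 𝔞 = spanSingleton R⁰ ξ}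

variable {𝔞} [IsDedekindDomain R]

theorem exists_coeIdeal_mul_eq_spanSingleton (h𝔞 : 𝔞 ≠ 0) {ξ : K} (hξ : ξ ∈ 𝔞) :
    ∃ I : Ideal R, (I : FractionalIdeal R⁰ K) * 𝔞 = spanSingleton R⁰ ξ := by
  have hle : spanSingleton R⁰ ξ * 𝔞⁻¹ ≤ 1 := by
    rw [← mul_inv_cancel₀ h𝔞]
    exact mul_le_mul_left (spanSingleton_le_iff_mem.mpr hξ) _
  obtain ⟨I, hI⟩ := le_one_iff_exists_coeIdeal.mp hle
  exact ⟨I, by rw [hI, mul_assoc, inv_mul_cancel₀ h𝔞, mul_one]⟩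

theorem ne_bot_of_coeIdeal_mul_eq_spanSingleton {I : Ideal R} {ξ : K}
    (h : (I : FractionalIdeal R⁰ K) * 𝔞 = spanSingleton R⁰ ξ) (hξ : ξ ≠ 0) : I ≠ ⊥ := by
  rintro rfl
  rw [coeIdeal_bot, zero_mul, eq_comm, spanSingleton_eq_zero_iff] at h
  exact hξ h

theorem mem_of_coeIdeal_mul_eq_spanSingleton {I : Ideal R} {ξ : K}
    (h : (I : FractionalIdeal R⁰ K) * 𝔞 = spanSingleton R⁰ ξ) : ξ ∈ 𝔞 := by
  rw [← spanSingleton_le_iff_mem, ← h]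
  exact mul_le_of_le_one_left' coeIdeal_le_one

noncomputable def idealOfElem (h𝔞 : 𝔞 ≠ 0) (ξ : 𝔞.NonzeroElems) : 𝔞.IdealsMulPrincipal :=
  have hI := (exists_coeIdeal_mul_eq_spanSingleton h𝔞 ξ.2.1).choose_spec
  ⟨_, ne_bot_of_coeIdeal_mul_eq_spanSingleton hI ξ.2.2, ξ, ξ.2.2, hI⟩

theorem coeIdeal_idealOfElem_mul (h𝔞 : 𝔞 ≠ 0) (ξ : 𝔞.NonzeroElems) :
    ((idealOfElem h𝔞 ξ : Ideal R) : FractionalIdeal R⁰ K) * 𝔞 = spanSingleton R⁰ (ξ : K) :=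
  (exists_coeIdeal_mul_eq_spanSingleton h𝔞 ξ.2.1).choose_spec

theorem idealOfElem_eq_iff (h𝔞 : 𝔞 ≠ 0) (ξ : 𝔞.NonzeroElems) (I : 𝔞.IdealsMulPrincipal) :
    idealOfElem h𝔞 ξ = I ↔ (I : FractionalIdeal R⁰ K) * 𝔞 = spanSingleton R⁰ (ξ : K) := by
  rw [← coeIdeal_idealOfElem_mul h𝔞 ξ, mul_left_inj' h𝔞, coeIdeal_inj, eq_comm, Subtype.ext_iff]

theorem encard_fiber_idealOfElem (h𝔞 : 𝔞 ≠ 0) (I : 𝔞.IdealsMulPrincipal) :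
    ENat.card (idealOfElem h𝔞 ⁻¹' {I}) = ENat.card Rˣ := by
  obtain ⟨-, ξ₀, hξ₀, hI⟩ := I.2
  have hmem (ξ : 𝔞.NonzeroElems) : ξ ∈ idealOfElem h𝔞 ⁻¹' {I} ↔ ∃ u : Rˣ, u • ξ₀ = ξ := by
    rw [Set.mem_preimage, Set.mem_singleton_iff, idealOfElem_eq_iff, hI,
      spanSingleton_eq_spanSingleton]
  have hmem₀ := mem_of_coeIdeal_mul_eq_spanSingleton hI
  let e : Rˣ → idealOfElem h𝔞 ⁻¹' {I} := fun u ↦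
    ⟨⟨u • ξ₀, Submodule.smul_of_tower_mem _ u hmem₀, (smul_ne_zero_iff_ne u).mpr hξ₀⟩,
      (hmem _).mpr ⟨u, rfl⟩⟩
  refine (ENat.card_congr (Equiv.ofBijective e ⟨fun u v huv ↦ ?_, fun ξ ↦ ?_⟩)).symm
  · refine Units.ext (smul_left_injective R hξ₀ ?_)
    simpa [e, Units.smul_def] using Subtype.ext_iff.mp (Subtype.ext_iff.mp huv)
  · obtain ⟨u, hu⟩ := (hmem ξ).mp ξ.2
    exact ⟨u, Subtype.ext (Subtype.ext hu)⟩

end DedekindDomain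

theorem absNorm_mul_absNorm_eq_abs_norm {K : Type*} [Field K] [NumberField K]
    {𝔞 : FractionalIdeal (𝓞 K)⁰ K} {I : Ideal (𝓞 K)} {ξ : K}
    (h : (I : FractionalIdeal (𝓞 K)⁰ K) * 𝔞 = spanSingleton (𝓞 K)⁰ ξ) :
    (Ideal.absNorm I : ℚ) * absNorm 𝔞 = |Algebra.norm ℚ ξ| := by
  simpa [coeIdeal_absNorm, absNorm_span_singleton] using congrArg absNorm h

end FractionalIdeal

open FractionalIdeal NumberField.InfinitePlace in
theorem partial_zeta_of_ideal_class_general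
    (K : Type*) [Field K] [NumberField K]
    (hdeg : Module.finrank ℚ K = 2)
    (σ : K →+* ℂ) (him : ∃ x : K, (σ x).im ≠ 0)
    (𝔞 : FractionalIdeal (nonZeroDivisors (𝓞 K)) K) (h𝔞 : 𝔞 ≠ 0)
    (s : ℝ) :
    ((FractionalIdeal.absNorm 𝔞 : ℝ) ^ s) *
        (∑' ξ : {x : K // x ∈ 𝔞 ∧ x ≠ 0}, ‖σ (ξ : K)‖ ^ (-(2 * s)))
      = (Nat.card (𝓞 K)ˣ : ℝ) *
        ∑' I : {I : Ideal (𝓞 K) // I ≠ ⊥ ∧ ∃ ξ : K, ξ ≠ 0 ∧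
            (I : FractionalIdeal (nonZeroDivisors (𝓞 K)) K) * 𝔞 =
              FractionalIdeal.spanSingleton (nonZeroDivisors (𝓞 K)) ξ},
          (Ideal.absNorm (I : Ideal (𝓞 K)) : ℝ) ^ (-s) := by
  obtain ⟨x, hx⟩ := him
  have hσ := ComplexEmbedding.not_isReal_of_im_ne_zero hx
  have := subsingleton_of_finrank_eq_two hdeg hσ
  have := Units.finite_of_subsingleton_infinitePlace (K := K)
  have hN𝔞 : (0 : ℝ) < absNorm 𝔞 := by
    exact_mod_cast (absNorm_nonneg 𝔞).lt_of_ne' (absNorm_eq_zero_iff.not.mpr h𝔞)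
  have hterm (ξ : 𝔞.NonzeroElems) : (absNorm 𝔞 : ℝ) ^ s * ‖σ ξ‖ ^ (-(2 * s)) =
      (Ideal.absNorm (idealOfElem h𝔞 ξ : Ideal (𝓞 K)) : ℝ) ^ (-s) := by
    refine Real.rpow_mul_rpow_neg_two_mul hN𝔞 (Nat.cast_nonneg _) (norm_nonneg _) ?_ s
    rw [← abs_norm_eq_norm_sq hσ,
      ← absNorm_mul_absNorm_eq_abs_norm (coeIdeal_idealOfElem_mul h𝔞 ξ)]
    norm_cast
  rw [← tsum_mul_left, tsum_congr hterm]
  exact tsum_comp_eq_mul_tsum_of_encard_fiber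
    (f := fun I : 𝔞.IdealsMulPrincipal ↦ (Ideal.absNorm (I : Ideal (𝓞 K)) : ℝ) ^ (-s))
    (fun I ↦ by rw [encard_fiber_idealOfElem, ENat.card_eq_coe_natCard]) fun _ ↦ by positivity

/-- For an imaginary quadratic field `K` embedded in `ℂ`, a nonzero fractional ideal `𝔞`
and `s > 1`:
`N(𝔞)^s · Σ_{0 ≠ ξ ∈ 𝔞} |ξ|^{-2s} = #(O_K^×) · Σ_{I integral, in the class of 𝔞⁻¹} N(I)^{-s}`. -/
theorem partial_zeta_of_ideal_class
    (K : Type*) [Field K] [NumberField K]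
    (hdeg : Module.finrank ℚ K = 2)
    (σ : K →+* ℂ) (him : ∃ x : K, (σ x).im ≠ 0)
    (𝔞 : FractionalIdeal (nonZeroDivisors (𝓞 K)) K) (h𝔞 : 𝔞 ≠ 0)
    (s : ℝ) (hs : 1 < s) :
    ((FractionalIdeal.absNorm 𝔞 : ℝ) ^ s) *
        (∑' ξ : {x : K // x ∈ 𝔞 ∧ x ≠ 0}, ‖σ (ξ : K)‖ ^ (-(2 * s)))
      = (Nat.card (𝓞 K)ˣ : ℝ) *
        ∑' I : {I : Ideal (𝓞 K) // I ≠ ⊥ ∧ ∃ ξ : K, ξ ≠ 0 ∧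
            (I : FractionalIdeal (nonZeroDivisors (𝓞 K)) K) * 𝔞 =
              FractionalIdeal.spanSingleton (nonZeroDivisors (𝓞 K)) ξ},
          (Ideal.absNorm (I : Ideal (𝓞 K)) : ℝ) ^ (-s) :=
  partial_zeta_of_ideal_class_general K hdeg σ him 𝔞 h𝔞 s
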